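/- arXiv:1912.06486 — 7 statements merged into one kernel-verified Lean document; each statement's English description precedes it below -/
import Mathlib

section
/- Let n be even and ξ ∈ F_{2^n} nonzero. If Tr(ξ^{-1}) = 1 (where Tr is the absolute trace from F_{2^n} to F_2), then the polynomial x^3 + x + ξ has exactly one root in F_{2^n}. -/
/-!
In characteristic 2, `1 / (x³ + x) = 1 / x + y + y²` with `y = 1 / (x + 1)`, so `x ↦ x³ + x`
preserves `Tr (1 / x)` (using `Tr 1 = n = 0` at `x = 1`) and maps `S = {x | Tr (1 / x) = 1}` into
itself. Two distinct solutions `x ≠ z` of `x³ + x = ξ` satisfy `x² + x z + z² = 1`, i.e.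
`w + w² = 1 + 1 / x²` for `w = z / x`, whence `Tr (1 / x) = Tr (1 / x²) = Tr 1 = 0`. So for
`ξ ∈ S` there is at most one solution, the map is injective on the finite set `S`, hence onto
it, and there is exactly one.
-/

open Polynomial Finset

def absTrace {R : Type*} [CommSemiring R] (n : ℕ) (x : R) : R :=
  ∑ i ∈ range n, x ^ 2 ^ i

@[simp]
lemma absTrace_zero {R : Type*} [CommSemiring R] {n : ℕ} : absTrace n (0 : R) = 0 := by
  simp [absTrace]

section CharTwo

variable {R : Type*} [CommRing R] [CharP R 2] {n : ℕ}

lemma absTrace_add (x y : R) : absTrace n (x + y) = absTrace n x + absTrace n y := by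
  simp only [absTrace, add_pow_char_pow, sum_add_distrib]

lemma absTrace_one_of_even (hn : Even n) : absTrace n (1 : R) = 0 := by
  simp [absTrace, CharTwo.natCast_eq_ite, hn]

end CharTwo

section FiniteField

variable {F : Type*} [Field F] [Fintype F] {n : ℕ} (hF : Fintype.card F = 2 ^ n)
include hF

lemma absTrace_sq (x : F) : absTrace n (x ^ 2) = absTrace n x := by
  have hfix : x ^ 2 ^ n = x := hF ▸ FiniteField.pow_card x
  have hshift : absTrace n (x ^ 2) + x ^ 2 ^ 0 = absTrace n x + x ^ 2 ^ n := by
    simp only [absTrace, ← pow_mul, ← pow_succ']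
    rw [← sum_range_succ' (fun i => x ^ 2 ^ i), sum_range_succ]
  rwa [hfix, pow_zero, pow_one, add_left_inj] at hshift

variable [CharP F 2]

lemma absTrace_add_sq (x : F) : absTrace n (x + x ^ 2) = 0 := by
  rw [absTrace_add, absTrace_sq hF, CharTwo.add_self_eq_zero]

lemma absTrace_inv_cube_add_self (hn : Even n) (x : F) :
    absTrace n (x ^ 3 + x)⁻¹ = absTrace n x⁻¹ := by
  by_cases hx0 : x = 0
  · simp [hx0]
  by_cases hx1 : x = 1
  · simp [hx1, CharTwo.add_self_eq_zero, absTrace_one_of_even hn]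
  have hx1' : x + 1 ≠ 0 := by rwa [Ne, CharTwo.add_eq_zero]
  have h2 : (2 : F) = 0 := CharTwo.two_eq_zero
  have hfactor : x ^ 3 + x = x * (x + 1) ^ 2 := by linear_combination (-x ^ 2) * h2
  have hsplit : (x ^ 3 + x)⁻¹ = x⁻¹ + ((x + 1)⁻¹ + (x + 1)⁻¹ ^ 2) := by
    rw [hfactor]
    field_simp
    linear_combination (-2 * x - x ^ 2) * h2
  rw [hsplit, absTrace_add, absTrace_add_sq hF, add_zero]

lemma eq_of_cube_add_self_eq (hn : Even n) {ξ x z : F} (htr : absTrace n ξ⁻¹ = 1)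
    (hx : x ^ 3 + x = ξ) (hz : z ^ 3 + z = ξ) : x = z := by
  by_contra hxz
  have h2 : (2 : F) = 0 := CharTwo.two_eq_zero
  have hx0 : x ≠ 0 := by rintro rfl; simp [← hx] at htr
  have hquad : x ^ 2 + x * z + z ^ 2 = 1 := by
    have hprod : (x - z) * (x ^ 2 + x * z + z ^ 2 - 1) = 0 := by
      linear_combination hx - hz + (z - x) * h2
    exact sub_eq_zero.mp ((mul_eq_zero.mp hprod).resolve_left (sub_ne_zero.mpr hxz))
  have hw : z / x + (z / x) ^ 2 = 1 + x⁻¹ ^ 2 := by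
    field_simp
    linear_combination hquad - x ^ 2 * h2
  have htr0 : absTrace n x⁻¹ = 0 := by
    calc absTrace n x⁻¹ = absTrace n 1 + absTrace n (x⁻¹ ^ 2) := by
          rw [absTrace_one_of_even hn, zero_add, absTrace_sq hF]
      _ = 0 := by rw [← absTrace_add, ← hw, absTrace_add_sq hF]
  rw [← hx, absTrace_inv_cube_add_self hF hn, htr0] at htr
  exact zero_ne_one htr

lemma exists_cube_add_self_eq (hn : Even n) {ξ : F} (htr : absTrace n ξ⁻¹ = 1) :
    ∃ x, x ^ 3 + x = ξ := by
  set S : Set F := {x | absTrace n x⁻¹ = 1}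
  have hmaps : Set.MapsTo (fun x : F => x ^ 3 + x) S S := fun x hx => by
    simpa [S, absTrace_inv_cube_add_self hF hn] using hx
  have hinj : Set.InjOn (fun x : F => x ^ 3 + x) S := fun x hx z _ hxz =>
    eq_of_cube_add_self_eq hF hn (hmaps hx) rfl hxz.symm
  obtain ⟨x, -, hx⟩ := ((S.toFinite.injOn_iff_bijOn_of_mapsTo hmaps).mp hinj).surjOn htr
  exact ⟨x, hx⟩

end FiniteField

theorem stmt_4_general (n : ℕ) (hne : Even n) (F : Type*) [Field F] [Fintype F] [DecidableEq F]
    (hF : Fintype.card F = 2 ^ n) (ξ : F)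
    (htr : ∑ i ∈ Finset.range n, ξ⁻¹ ^ 2 ^ i = 1) :
    (X ^ 3 + X + C ξ : F[X]).roots.toFinset.card = 1 := by
  have : CharP F 2 := charP_of_card_eq_prime_pow hF
  have htr : absTrace n ξ⁻¹ = 1 := htr
  obtain ⟨x₀, hx₀⟩ := exists_cube_add_self_eq hF hne htr
  have hp : (X ^ 3 + X + C ξ : F[X]) ≠ 0 :=
    (by monicity! : Monic (X ^ 3 + X + C ξ : F[X])).ne_zero
  rw [card_eq_one]
  refine ⟨x₀, ext fun x => ?_⟩
  simp only [Multiset.mem_toFinset, mem_singleton, mem_roots hp, IsRoot.def, eval_add, eval_pow,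
    eval_X, eval_C, CharTwo.add_eq_zero]
  exact ⟨fun hx => eq_of_cube_add_self_eq hF hne htr hx hx₀, fun hx => hx ▸ hx₀⟩

theorem stmt_4 (n : ℕ) (hn : 0 < n) (hne : Even n) (F : Type*) [Field F] [Fintype F] [DecidableEq F]
    (hF : Fintype.card F = 2 ^ n) (ξ : F) (hξ : ξ ≠ 0)
    (htr : ∑ i ∈ Finset.range n, ξ⁻¹ ^ 2 ^ i = 1) :
    (X ^ 3 + X + C ξ : F[X]).roots.toFinset.card = 1 :=
  stmt_4_general n hne F hF ξ htr
end

section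
/- Let n be even. For every nonzero r ∈ F_{2^n}, the element ξ = r^3 + r^{-3} satisfies: the polynomial x^3 + x + ξ has three roots (counted with multiplicity) in F_{2^n}. -/
open Polynomial

theorem stmt_5 (n : ℕ) (hn : 0 < n) (hne : Even n) (F : Type*) [Field F] [Fintype F]
    (hF : Fintype.card F = 2 ^ n) (r : F) (hr : r ≠ 0) :
    Multiset.card (X ^ 3 + X + C (r ^ 3 + r⁻¹ ^ 3) : F[X]).roots = 3 := by
  classical
  -- characteristic 2
  have hcast : ((2 ^ n : ℕ) : F) = 0 := by
    rw [← hF]; exact FiniteField.cast_card_eq_zero F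
  have hdvd : ringChar F ∣ 2 ^ n := (ringChar.spec F (2 ^ n)).mp ?later
  case later => exact_mod_cast hcast
  have hprime : Nat.Prime (ringChar F) := CharP.char_is_prime F (ringChar F)
  have hchar2 : ringChar F = 2 :=
    (Nat.prime_dvd_prime_iff_eq hprime Nat.prime_two).mp (hprime.dvd_of_dvd_pow hdvd)
  have h2 : (2 : F) = 0 := by
    have := ringChar.Nat.cast_ringChar (R := F)
    rw [hchar2] at this; exact_mod_cast this
  -- cube root of unity
  obtain ⟨m, hm⟩ := hne
  have h3dvd : 3 ∣ Fintype.card Fˣ := by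
    rw [Fintype.card_units, hF]
    have : 2 ^ n = 4 ^ m := by rw [hm, ← two_mul, pow_mul]; norm_num
    rw [this]
    have := Nat.sub_dvd_pow_sub_pow 4 1 m
    simpa using this
  obtain ⟨u, hu⟩ := exists_prime_orderOf_dvd_card (G := Fˣ) 3 h3dvd
  set ω : F := (u : F) with hωdef
  have hω3 : ω ^ 3 = 1 := by
    have : u ^ 3 = 1 := by rw [← hu]; exact pow_orderOf_eq_one u
    have := congrArg (Units.val) this
    simpa [hωdef] using this
  have hωne1 : ω ≠ 1 := by
    intro h
    have : u = 1 := Units.val_eq_one.mp h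
    rw [this, orderOf_one] at hu; norm_num at hu
  have hω : ω ^ 2 + ω + 1 = 0 := by
    have hmul : (ω - 1) * (ω ^ 2 + ω + 1) = 0 := by linear_combination hω3
    rcases mul_eq_zero.mp hmul with h | h
    · exact absurd (sub_eq_zero.mp h) hωne1
    · exact h
  -- the three roots
  set s : F := r⁻¹ with hs
  have hrs : r * s = 1 := mul_inv_cancel₀ hr
  set a : F := r + s with ha
  set b : F := ω * r + ω ^ 2 * s with hb
  set c : F := ω ^ 2 * r + ω * s with hc
  have hA : a + b + c = 0 := by
    rw [ha, hb, hc]; linear_combination (r + s) * hω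
  have hB : a * b + a * c + b * c = 1 := by
    rw [ha, hb, hc]
    linear_combination (ω * (r ^ 2 + s ^ 2) + r * s * (ω ^ 2 - ω + 3)) * hω
      + (-3 : F) * hrs + (-2 : F) * h2
  have hC : a * b * c = -(r ^ 3 + s ^ 3) := by
    rw [ha, hb, hc]
    linear_combination ((r + s) * ((r ^ 2 + s ^ 2) * (ω - 1) + r * s * (ω ^ 2 - ω + 1))) * hω
      + (r ^ 3 + s ^ 3) * h2
  -- lift to polynomials
  have hA' : C a + C b + C c = 0 := by rw [← map_add, ← map_add, hA, map_zero]
  have hB' : C a * C b + C a * C c + C b * C c = 1 := by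
    rw [← map_mul, ← map_mul, ← map_mul, ← map_add, ← map_add, hB, map_one]
  have hC' : C a * C b * C c = -C (r ^ 3 + r⁻¹ ^ 3) := by
    rw [← map_mul, ← map_mul, hC, map_neg]
  have hpoly : (X ^ 3 + X + C (r ^ 3 + r⁻¹ ^ 3) : F[X]) = (X - C a) * (X - C b) * (X - C c) := by
    linear_combination (X : F[X]) ^ 2 * hA' - (X : F[X]) * hB' + hC'
  rw [hpoly, roots_mul (mul_ne_zero (mul_ne_zero (X_sub_C_ne_zero a) (X_sub_C_ne_zero b))
    (X_sub_C_ne_zero c)), roots_mul (mul_ne_zero (X_sub_C_ne_zero a) (X_sub_C_ne_zero b)),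
    roots_X_sub_C, roots_X_sub_C, roots_X_sub_C]
  simp
end

section
/- Let n be even and ξ ∈ F_{2^n} nonzero with Tr(ξ^{-1}) = 0. If x^3 + x + ξ splits into three distinct linear factors over F_{2^n}, then there exists s ∈ F_{2^n} with s^{(2^n-1)/3} = 1 and ξ = s + s^{-1}. -/
open Polynomial

theorem stmt_6 (n : ℕ) (hn : 0 < n) (hne : Even n) (F : Type*) [Field F] [Fintype F] [DecidableEq F]
    (hF : Fintype.card F = 2 ^ n) (ξ : F) (hξ : ξ ≠ 0)
    (htr : ∑ i ∈ Finset.range n, ξ⁻¹ ^ 2 ^ i = 0)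
    (hsplit : (X ^ 3 + X + C ξ : F[X]).roots.toFinset.card = 3) :
    ∃ s : F, s ^ ((2 ^ n - 1) / 3) = 1 ∧ ξ = s + s⁻¹ := by
  classical
  -- characteristic 2
  have hcast : ((Fintype.card F : ℕ) : F) = 0 := FiniteField.cast_card_eq_zero F
  have h2 : (2 : F) = 0 := by
    rw [hF] at hcast
    push_cast at hcast
    exact (pow_eq_zero_iff hn.ne').mp hcast
  -- the polynomial and roots
  have hpn : (X ^ 3 + X + C ξ : F[X]) ≠ 0 := by
    intro h
    have hc : (X ^ 3 + X + C ξ : F[X]).coeff 3 = 0 := by rw [h]; simp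
    simp [coeff_add, coeff_X_pow, coeff_X, coeff_C] at hc
  obtain ⟨r1, r2, r3, hne12, hne13, hne23, hset⟩ := Finset.card_eq_three.mp hsplit
  have hroot : ∀ r ∈ ({r1, r2, r3} : Finset F), r ^ 3 + r + ξ = 0 := by
    intro r hr
    rw [← hset, Multiset.mem_toFinset, mem_roots hpn] at hr
    have := hr
    simp only [IsRoot, eval_add, eval_pow, eval_X, eval_C] at this
    exact this
  have hq1 : r1 ^ 3 + r1 + ξ = 0 := hroot r1 (by simp)
  have hq2 : r2 ^ 3 + r2 + ξ = 0 := hroot r2 (by simp)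
  have hq3 : r3 ^ 3 + r3 + ξ = 0 := hroot r3 (by simp)
  -- pairwise relations
  have h12 : r1 ^ 2 + r1 * r2 + r2 ^ 2 = 1 := by
    have key : (r1 - r2) * (r1 ^ 2 + r1 * r2 + r2 ^ 2 - 1) = 0 := by
      linear_combination hq1 - hq2 + (r2 - r1) * h2
    rcases mul_eq_zero.mp key with h | h
    · exact absurd (sub_eq_zero.mp h) hne12
    · exact sub_eq_zero.mp h
  have h13 : r1 ^ 2 + r1 * r3 + r3 ^ 2 = 1 := by
    have key : (r1 - r3) * (r1 ^ 2 + r1 * r3 + r3 ^ 2 - 1) = 0 := by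
      linear_combination hq1 - hq3 + (r3 - r1) * h2
    rcases mul_eq_zero.mp key with h | h
    · exact absurd (sub_eq_zero.mp h) hne13
    · exact sub_eq_zero.mp h
  have he1 : r1 + r2 + r3 = 0 := by
    have key : (r2 - r3) * (r1 + r2 + r3) = 0 := by
      linear_combination h12 - h13
    rcases mul_eq_zero.mp key with h | h
    · exact absurd (sub_eq_zero.mp h) hne23
    · exact h
  -- a primitive cube root of unity
  have h3dvd : (3 : ℕ) ∣ 2 ^ n - 1 := by
    obtain ⟨m, hm⟩ := hne
    have h4 : (2 : ℕ) ^ n = 4 ^ m := by rw [hm, pow_add, ← mul_pow]; norm_num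
    rw [h4]
    have := Nat.sub_dvd_pow_sub_pow 4 1 m
    simpa using this
  have hdvd' : (3 : ℕ) ∣ Fintype.card Fˣ := by
    rw [Fintype.card_units, hF]; exact h3dvd
  haveI : Fact (Nat.Prime 3) := ⟨by norm_num⟩
  obtain ⟨g, hg⟩ := exists_prime_orderOf_dvd_card 3 hdvd'
  set ω : F := (g : F) with hωdef
  have hω3 : ω ^ 3 = 1 := by
    have := pow_orderOf_eq_one g
    rw [hg] at this
    have := congrArg (Units.val) this
    push_cast at this
    exact this
  have hω1 : ω ≠ 1 := by
    intro h
    have hg1 : g = 1 := Units.val_eq_one.mp h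
    rw [hg1, orderOf_one] at hg
    norm_num at hg
  have hω : ω ^ 2 + ω + 1 = 0 := by
    have key : (ω - 1) * (ω ^ 2 + ω + 1) = 0 := by linear_combination hω3
    rcases mul_eq_zero.mp key with h | h
    · exact absurd (sub_eq_zero.mp h) hω1
    · exact h
  -- Lagrange resolvents
    -- u = r1 + ω r2 + ω² r3, v = r1 + ω² r2 + ω r3
  set u : F := r1 + ω * r2 + ω ^ 2 * r3 with hudef
  set v : F := r1 + ω ^ 2 * r2 + ω * r3 with hvdef
  have huv : u * v = 1 := by
    rw [hudef, hvdef]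
    linear_combination (r3*ω^3 + r2*ω^2 + ((-1) : F)*r2*ω^3 + r2*ω^4 + r1*ω + r1*ω^2 + ((-1) : F)*r1*ω^3) * he1 + (((-3) : F)*r2^2 + (3 : F)*r2^2*ω + ((-1) : F)*r2^2*ω^2 + ((-3) : F)*r1*r2 + (3 : F)*r1*r2*ω + ((-1) : F)*r1*r2*ω^2 + ((-2) : F)*r1^2 + r1^2*ω) * hω + ((3 : F)) * h12 + ((1 : F)) * h2
  have hsum : u ^ 3 + v ^ 3 = ξ := by
    rw [hudef, hvdef]
    linear_combination (r3^2*ω^3 + r3^2*ω^6 + ((-1) : F)*r2*r3*ω^3 + (3 : F)*r2*r3*ω^4 + (3 : F)*r2*r3*ω^5 + ((-1) : F)*r2*r3*ω^6 + r2^2*ω^3 + r2^2*ω^6 + (3 : F)*r1*r3*ω^2 + ((-1) : F)*r1*r3*ω^3 + (3 : F)*r1*r3*ω^4 + ((-1) : F)*r1*r3*ω^6 + ((-3) : F)*r1*r2*ω^2 + (14 : F)*r1*r2*ω^3 + ((-6) : F)*r1*r2*ω^4 + ((-3) : F)*r1*r2*ω^5 + (2 : F)*r1*r2*ω^6 + (3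 : F)*r1^2*ω + r1^2*ω^3 + ((-3) : F)*r1^2*ω^4 + r1^2*ω^6) * he1 + ((27 : F)*r1*r2^2 + ((-27) : F)*r1*r2^2*ω + (6 : F)*r1*r2^2*ω^2 + (6 : F)*r1*r2^2*ω^3 + ((-3) : F)*r1*r2^2*ω^4 + (27 : F)*r1^2*r2 + ((-27) : F)*r1^2*r2*ω + (6 : F)*r1^2*r2*ω^2 + (6 : F)*r1^2*r2*ω^3 + ((-3) : F)*r1^2*r2*ω^4 + (2 : F)*r1^3 + ((-5) : F)*r1^3*ω + (3 : F)*r1^3*ω^2 + r1^3*ω^3 + ((-1) : F)*r1^3*ω^4) * hω + (((-27) : F)*r1) * h12 + ((27 : F)) * hq1 + (((-14) : F)*ξ + ((-27) : F)*r1) * h2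
  have hu0 : u ≠ 0 := left_ne_zero_of_mul_eq_one huv
  refine ⟨u ^ 3, ?_, ?_⟩
  · rw [← pow_mul, Nat.mul_div_cancel' h3dvd, ← hF]
    exact FiniteField.pow_card_sub_one_eq_one u hu0
  · have hmul : u ^ 3 * v ^ 3 = 1 := by rw [← mul_pow, huv, one_pow]
    rw [inv_eq_of_mul_eq_one_right hmul]
    exact hsum.symm
end

section
/- Let n be odd and ξ ∈ F_{2^n} nonzero. If Tr(ξ^{-1}) = 0, then the polynomial x^3 + x + ξ has exactly one root in F_{2^n}. -/
/-!
Write Tr a = ∑_{i<n} a^{2^i}. For n odd and Tr a = 0 the Artin–Schreier equation z² + z = a is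
solved by the half trace ∑_{i ≤ (n-1)/2} a^{4^i}. Solving z² + z = ξ⁻² (note Tr ξ⁻² = Tr ξ⁻¹), the
element T = ξz satisfies T² + ξT + 1 = 0; as 3 is prime to 2ⁿ - 1, T = u³ for some u, and
x = u + u⁻¹ is a root of x³ + x + ξ. If x ≠ y were two roots, s = x + y would satisfy
ξ = s(s + 1)² and (x/s)² + x/s = 1 + s⁻², whence Tr s⁻¹ = Tr 1 = 1; the partial fractions
ξ⁻¹ = s⁻¹ + (s + 1)⁻² + (s + 1)⁻¹ then give Tr ξ⁻¹ = 1.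
-/

open Polynomial Finset

section FrobeniusTrace

variable {R : Type*} [CommRing R]

def frobeniusTrace (p n : ℕ) (a : R) : R := ∑ i ∈ range n, a ^ p ^ i

theorem frobeniusTrace_add (p n : ℕ) [Fact p.Prime] [CharP R p] (a b : R) :
    frobeniusTrace p n (a + b) = frobeniusTrace p n a + frobeniusTrace p n b := by
  simp only [frobeniusTrace, ← sum_add_distrib, add_pow_char_pow]

theorem frobeniusTrace_one (p n : ℕ) : frobeniusTrace p n (1 : R) = n := by
  simp [frobeniusTrace]

theorem frobeniusTrace_succ (p n : ℕ) (a : R) :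
    frobeniusTrace p (n + 1) a = frobeniusTrace p n a + a ^ p ^ n :=
  sum_range_succ _ n

theorem frobeniusTrace_pow_add_self (p n : ℕ) (a : R) :
    frobeniusTrace p n (a ^ p) + a = frobeniusTrace p (n + 1) a := by
  simp only [frobeniusTrace, sum_range_succ' _ n, ← pow_mul, ← pow_succ', pow_zero, pow_one]

theorem frobeniusTrace_pow_char {F : Type*} [Field F] [Fintype F] {p n : ℕ}
    (hF : Fintype.card F = p ^ n) (a : F) : frobeniusTrace p n (a ^ p) = frobeniusTrace p n a := by
  have h := frobeniusTrace_pow_add_self p n a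
  rwa [frobeniusTrace_succ, ← hF, FiniteField.pow_card, add_left_inj] at h

def halfTrace (k : ℕ) (a : R) : R := ∑ i ∈ range k, a ^ 4 ^ i

end FrobeniusTrace

section CharTwo

variable {R : Type*} [CommRing R] [CharP R 2]

theorem frobeniusTrace_one_of_odd {n : ℕ} (hn : Odd n) : frobeniusTrace 2 n (1 : R) = 1 := by
  rw [frobeniusTrace_one, CharTwo.natCast_eq_ite, if_neg (Nat.not_even_iff_odd.mpr hn)]

theorem halfTrace_sq_add_self (k : ℕ) (a : R) :
    halfTrace k a ^ 2 + halfTrace k a = frobeniusTrace 2 (2 * k) a := by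
  induction k with
  | zero => simp [halfTrace, frobeniusTrace]
  | succ k ih =>
    have h4 : a ^ 4 ^ k = a ^ 2 ^ (2 * k) := by rw [pow_mul]; norm_num
    rw [halfTrace, sum_range_succ, ← halfTrace, CharTwo.add_sq, add_add_add_comm, ih,
      Nat.mul_succ, frobeniusTrace_succ, frobeniusTrace_succ, h4, ← pow_mul, ← pow_succ]
    ring

variable {F : Type*} [Field F] [CharP F 2]

theorem frobeniusTrace_sq_add_self [Fintype F] {n : ℕ} (hF : Fintype.card F = 2 ^ n) (a : F) :
    frobeniusTrace 2 n (a ^ 2 + a) = 0 := by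
  rw [frobeniusTrace_add, frobeniusTrace_pow_char hF, CharTwo.add_self_eq_zero]

theorem exists_sq_add_self_eq [Fintype F] {n : ℕ} (hn : Odd n) (hF : Fintype.card F = 2 ^ n)
    {a : F} (ha : frobeniusTrace 2 n a = 0) : ∃ z : F, z ^ 2 + z = a := by
  obtain ⟨m, rfl⟩ := hn
  refine ⟨halfTrace (m + 1) a, ?_⟩
  rw [halfTrace_sq_add_self, show 2 * (m + 1) = 2 * m + 1 + 1 by ring, frobeniusTrace_succ, ha,
    ← hF, FiniteField.pow_card, zero_add]

theorem mul_sq_add_mul_add_one_eq_zero {ξ z : F} (hξ : ξ ≠ 0) (hz : z ^ 2 + z = ξ⁻¹ ^ 2) :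
    (ξ * z) ^ 2 + ξ * (ξ * z) + 1 = 0 := by
  have h : ξ ^ 2 * (z ^ 2 + z) = 1 := by rw [hz, ← mul_pow, mul_inv_cancel₀ hξ, one_pow]
  linear_combination h + CharTwo.two_eq_zero (R := F)

theorem add_inv_cube_add_add_eq_zero {ξ u : F} (hu : u ≠ 0) (h : (u ^ 3) ^ 2 + ξ * u ^ 3 + 1 = 0) :
    (u + u⁻¹) ^ 3 + (u + u⁻¹) + ξ = 0 := by
  field_simp
  linear_combination h + (2 * u ^ 4 + 2 * u ^ 2) * CharTwo.two_eq_zero (R := F)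

theorem sq_add_mul_add_sq_of_cubic_roots {ξ x y : F} (hxy : x ≠ y) (hx : x ^ 3 + x + ξ = 0)
    (hy : y ^ 3 + y + ξ = 0) : x ^ 2 + x * y + y ^ 2 = 1 := by
  have hs : x + y ≠ 0 := fun h ↦ hxy (CharTwo.add_eq_zero.mp h)
  refine sub_eq_zero.mp ((mul_eq_zero.mp ?_).resolve_left hs)
  linear_combination hx - hy + (x ^ 2 * y + x * y ^ 2 + y ^ 3 - x) * CharTwo.two_eq_zero (R := F)

theorem eq_add_mul_add_add_one_sq_of_cubic_roots {ξ x y : F} (hxy : x ≠ y)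
    (hx : x ^ 3 + x + ξ = 0) (hy : y ^ 3 + y + ξ = 0) : ξ = (x + y) * (x + y + 1) ^ 2 := by
  linear_combination -hx + y * sq_add_mul_add_sq_of_cubic_roots hxy hx hy +
    (ξ - x ^ 2 - 2 * x * y - 2 * x * y ^ 2 - 2 * x ^ 2 * y - y ^ 2 - y ^ 3) *
      CharTwo.two_eq_zero (R := F)

theorem div_add_sq_add_div_add_of_cubic_roots {ξ x y : F} (hxy : x ≠ y)
    (hx : x ^ 3 + x + ξ = 0) (hy : y ^ 3 + y + ξ = 0) :
    (x / (x + y)) ^ 2 + x / (x + y) = 1 + (x + y)⁻¹ ^ 2 := by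
  have hs : x + y ≠ 0 := fun h ↦ hxy (CharTwo.add_eq_zero.mp h)
  field_simp
  linear_combination sq_add_mul_add_sq_of_cubic_roots hxy hx hy +
    (-x * y - y ^ 2) * CharTwo.two_eq_zero (R := F)

theorem inv_mul_add_one_sq {s : F} (hs : s ≠ 0) (hs1 : s + 1 ≠ 0) :
    (s * (s + 1) ^ 2)⁻¹ = s⁻¹ + ((s + 1)⁻¹ ^ 2 + (s + 1)⁻¹) := by
  field_simp
  linear_combination (-s ^ 2 - 2 * s) * CharTwo.two_eq_zero (R := F)

theorem eq_of_cubic_roots [Fintype F] {n : ℕ} (hn : Odd n) (hF : Fintype.card F = 2 ^ n)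
    {ξ x y : F} (hξ : ξ ≠ 0) (htr : frobeniusTrace 2 n ξ⁻¹ = 0) (hx : x ^ 3 + x + ξ = 0)
    (hy : y ^ 3 + y + ξ = 0) : x = y := by
  by_contra hxy
  have hξs := eq_add_mul_add_add_one_sq_of_cubic_roots hxy hx hy
  have hw := div_add_sq_add_div_add_of_cubic_roots hxy hx hy
  set s := x + y
  have hs : s ≠ 0 := fun h ↦ hxy (CharTwo.add_eq_zero.mp h)
  have hs1 : s + 1 ≠ 0 := fun h ↦ hξ (by rw [hξs, h]; ring)
  have htrs : frobeniusTrace 2 n s⁻¹ = 1 := by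
    have h := frobeniusTrace_sq_add_self hF (x / s)
    rwa [hw, frobeniusTrace_add, frobeniusTrace_one_of_odd hn, frobeniusTrace_pow_char hF,
      CharTwo.add_eq_zero, eq_comm] at h
  have htr' : frobeniusTrace 2 n ξ⁻¹ = 1 := by
    rw [hξs, inv_mul_add_one_sq hs hs1, frobeniusTrace_add, frobeniusTrace_sq_add_self hF, htrs,
      add_zero]
  exact one_ne_zero (htr'.symm.trans htr)

end CharTwo

theorem coprime_two_pow_sub_one_three {n : ℕ} (hn : Odd n) : Nat.Coprime (2 ^ n - 1) 3 := by
  obtain ⟨k, rfl⟩ := hn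
  have h4 : 4 ^ k % 3 = 1 := by rw [Nat.pow_mod]; simp
  have h2 : 2 ^ (2 * k + 1) = 2 * 4 ^ k := by rw [pow_succ, pow_mul]; ring
  rw [Nat.coprime_comm, Nat.Prime.coprime_iff_not_dvd Nat.prime_three, h2]
  omega

theorem FiniteField.pow_three_surjective_units {F : Type*} [Field F] [Fintype F] {n : ℕ}
    (hn : Odd n) (hF : Fintype.card F = 2 ^ n) : Function.Surjective fun u : Fˣ ↦ u ^ 3 := by
  refine (Nat.Coprime.pow_left_bijective ?_).surjective
  rw [Nat.card_units, Nat.card_eq_fintype_card, hF]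
  exact coprime_two_pow_sub_one_three hn

theorem Polynomial.card_roots_toFinset_eq_one_iff {R : Type*} [CommRing R] [IsDomain R]
    [DecidableEq R] {p : R[X]} (hp : p ≠ 0) : p.roots.toFinset.card = 1 ↔ ∃! x, p.IsRoot x := by
  simp only [card_eq_one, Finset.ext_iff, Multiset.mem_toFinset, mem_roots hp, mem_singleton]
  exact ⟨fun ⟨a, ha⟩ ↦ ⟨a, (ha a).2 rfl, fun y ↦ (ha y).1⟩,
    fun ⟨a, ha, hu⟩ ↦ ⟨a, fun y ↦ ⟨hu y, fun h ↦ h ▸ ha⟩⟩⟩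

theorem stmt_8 (n : ℕ) (hn : Odd n) (F : Type*) [Field F] [Fintype F] [DecidableEq F]
    (hF : Fintype.card F = 2 ^ n) (ξ : F) (hξ : ξ ≠ 0)
    (htr : ∑ i ∈ Finset.range n, ξ⁻¹ ^ 2 ^ i = 0) :
    (X ^ 3 + X + C ξ : F[X]).roots.toFinset.card = 1 := by
  have : CharP F 2 := charP_of_card_eq_prime_pow hF
  have hmonic : (X ^ 3 + X + C ξ : F[X]).Monic := by monicity!
  have hisRoot (x : F) : (X ^ 3 + X + C ξ : F[X]).IsRoot x ↔ x ^ 3 + x + ξ = 0 := by simp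
  simp only [card_roots_toFinset_eq_one_iff hmonic.ne_zero, hisRoot]
  obtain ⟨z, hz⟩ := exists_sq_add_self_eq hn hF (a := ξ⁻¹ ^ 2)
    (by rwa [frobeniusTrace_pow_char hF])
  have hT := mul_sq_add_mul_add_one_eq_zero hξ hz
  obtain ⟨u, hu⟩ := FiniteField.pow_three_surjective_units hn hF
    (Units.mk0 (ξ * z) fun h ↦ by simp [h] at hT)
  have hu3 : (u : F) ^ 3 = ξ * z := by simpa [Units.ext_iff] using hu
  have hroot := add_inv_cube_add_add_eq_zero u.ne_zero (hu3 ▸ hT)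
  exact ⟨_, hroot, fun y hy ↦ eq_of_cubic_roots hn hF hξ htr hy hroot⟩
end

section
/- Let n be odd and let s ∈ F_{2^{2n}} satisfy s^{(2^n+1)/3} = 1 and s ≠ 1. Then ξ = s + s^{-1} lies in the subfield F_{2^n}, ξ ≠ 0, and the polynomial x^3 + x + ξ has three distinct roots in F_{2^n}. -/
/-!
Write `q = 2 ^ n`, so `q + 1 = 3 * m` divides `q ^ 2 - 1 = #Eˣ`. A primitive `(q + 1)`-th root of
unity `ζ` exists, and since `s ^ m = 1`, `s` has a cube root `c` among the powers of `ζ`; with `ω`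
a primitive cube root of unity, the cube roots `u = c * ω ^ i` of `s` satisfy `u ^ (q + 1) = 1`.
Hence `u ^ q = u⁻¹`, so `u + u⁻¹` is fixed by `x ↦ x ^ q`, and in characteristic two
`(u + u⁻¹) ^ 3 + (u + u⁻¹) = u ^ 3 + u⁻¹ ^ 3 = s + s⁻¹`. The three values are distinct because
`u + u⁻¹ = v + v⁻¹` forces `v = u` or `v = u⁻¹`, and the latter would give `s = s⁻¹`, i.e. `s = 1`.
-/

theorem FiniteField.charP_two_of_card_eq_two_pow {F : Type*} [Field F] [Fintype F] {k : ℕ}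
    (h : Fintype.card F = 2 ^ k) : CharP F 2 := by
  have h0 : (2 : F) ^ k = 0 := by exact_mod_cast h ▸ FiniteField.cast_card_eq_zero F
  exact CharTwo.of_one_ne_zero_of_two_eq_zero one_ne_zero (eq_zero_of_pow_eq_zero h0)

theorem FiniteField.exists_isPrimitiveRoot_of_dvd {F : Type*} [Field F] [Fintype F] {k : ℕ}
    (hk : k ∣ Fintype.card F - 1) : ∃ ζ : F, IsPrimitiveRoot ζ k := by
  classical
  obtain ⟨g, hg⟩ := IsCyclic.exists_ofOrder_eq_natCard (α := Fˣ)
  rw [Nat.card_eq_fintype_card, Fintype.card_units] at hg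
  obtain ⟨m, hm⟩ := hk
  have hpos : 0 < Fintype.card F - 1 := Nat.sub_pos_of_lt Fintype.one_lt_card
  refine ⟨(g : F) ^ m, IsPrimitiveRoot.pow hpos ?_ (by rw [hm, mul_comm])⟩
  exact IsPrimitiveRoot.coe_units_iff.mpr (hg ▸ IsPrimitiveRoot.orderOf g)

theorem IsPrimitiveRoot.exists_pow_eq_of_pow_eq_one {R : Type*} [CommRing R] [IsDomain R]
    {ζ s : R} {d m : ℕ} [NeZero d] [NeZero m] (hζ : IsPrimitiveRoot ζ (d * m)) (hs : s ^ m = 1) :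
    ∃ c : R, c ^ d = s ∧ c ^ (d * m) = 1 := by
  obtain ⟨i, -, rfl⟩ := hζ.eq_pow_of_pow_eq_one (ξ := s) (by rw [mul_comm, pow_mul, hs, one_pow])
  have hdi : d ∣ i := by
    have := hζ.dvd_of_pow_eq_one _ (by rwa [← pow_mul] at hs)
    exact Nat.dvd_of_mul_dvd_mul_right (Nat.pos_of_neZero m) this
  obtain ⟨j, rfl⟩ := hdi
  refine ⟨ζ ^ j, by rw [← pow_mul, mul_comm], ?_⟩
  rw [← pow_mul, mul_comm, pow_mul, hζ.pow_eq_one, one_pow]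

theorem add_inv_pow_expChar_pow_of_pow_eq_one {F : Type*} [Field F] {p : ℕ} [ExpChar F p]
    (n : ℕ) {u : F} (hu : u ^ (p ^ n + 1) = 1) : (u + u⁻¹) ^ p ^ n = u + u⁻¹ := by
  have hinv : u ^ p ^ n = u⁻¹ := eq_inv_of_mul_eq_one_left (by rwa [← pow_succ])
  rw [add_pow_expChar_pow, hinv, inv_pow, hinv, inv_inv, add_comm]

theorem eq_or_eq_inv_of_add_inv_eq_add_inv {F : Type*} [Field F] {u v : F} (hu : u ≠ 0)
    (hv : v ≠ 0) (h : u + u⁻¹ = v + v⁻¹) : v = u ∨ v = u⁻¹ := by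
  have : (v - u) * (u * v - 1) = 0 := by
    field_simp at h
    linear_combination -h
  rcases mul_eq_zero.mp this with h | h
  · exact .inl (sub_eq_zero.mp h)
  · exact .inr (eq_inv_of_mul_eq_one_right (sub_eq_zero.mp h))

namespace CharTwo

variable {F : Type*} [Field F] [CharP F 2]

theorem add_inv_pow_three_add_add_inv (u : F) :
    (u + u⁻¹) ^ 3 + (u + u⁻¹) + (u ^ 3 + (u ^ 3)⁻¹) = 0 := by
  rcases eq_or_ne u 0 with rfl | hu
  · simp
  field_simp
  linear_combination (1 + 2 * u ^ 2 + 2 * u ^ 4 + u ^ 6) * two_eq_zero (R := F)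

theorem eq_one_of_inv_eq {s : F} (hs : s ≠ 0) (h : s⁻¹ = s) : s = 1 := by
  rw [← sq_inj, one_pow, sq, ← mul_inv_cancel₀ hs, h]

theorem eq_of_pow_three_eq_of_add_inv_eq {s u v : F} (hs : s ≠ 0) (hs1 : s ≠ 1)
    (hu : u ^ 3 = s) (hv : v ^ 3 = s) (h : u + u⁻¹ = v + v⁻¹) : v = u := by
  have hne : ∀ {w : F}, w ^ 3 = s → w ≠ 0 := fun hw h0 => hs (by rw [← hw, h0]; ring)
  refine (eq_or_eq_inv_of_add_inv_eq_add_inv (hne hu) (hne hv) h).resolve_right fun hvu => hs1 ?_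
  exact eq_one_of_inv_eq hs (by rw [← hu, ← inv_pow, ← hvu, hv, hu])

end CharTwo

theorem stmt_12 (n : ℕ) (hn : Odd n) (E : Type*) [Field E] [Fintype E]
    (hE : Fintype.card E = 2 ^ (2 * n)) (s : E)
    (hs : s ^ ((2 ^ n + 1) / 3) = 1) (hs1 : s ≠ 1) :
    (s + s⁻¹) ^ (2 ^ n) = s + s⁻¹ ∧ s + s⁻¹ ≠ 0 ∧
    ∃ x y z : E, x ≠ y ∧ x ≠ z ∧ y ≠ z ∧
      x ^ (2 ^ n) = x ∧ y ^ (2 ^ n) = y ∧ z ^ (2 ^ n) = z ∧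
      x ^ 3 + x + (s + s⁻¹) = 0 ∧ y ^ 3 + y + (s + s⁻¹) = 0 ∧
      z ^ 3 + z + (s + s⁻¹) = 0 := by
  have := FiniteField.charP_two_of_card_eq_two_pow hE
  obtain ⟨m, hm⟩ : 3 ∣ 2 ^ n + 1 := by simpa using hn.nat_add_dvd_pow_add_pow 2 1
  have : NeZero m := ⟨by rintro rfl; simp at hm⟩
  rw [hm, Nat.mul_div_cancel_left _ three_pos] at hs
  have hs0 : s ≠ 0 := by rintro rfl; simp [NeZero.ne m] at hs
  obtain ⟨ζ, hζ⟩ := FiniteField.exists_isPrimitiveRoot_of_dvd (F := E) (k := 2 ^ n + 1)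
    ⟨2 ^ n - 1, by rw [hE, pow_mul', ← Nat.sq_sub_sq, one_pow]⟩
  rw [hm] at hζ
  obtain ⟨c, hc3, hc⟩ := hζ.exists_pow_eq_of_pow_eq_one hs
  obtain ⟨ω, hω⟩ : ∃ ω : E, IsPrimitiveRoot ω 3 := ⟨_, hζ.pow (NeZero.pos _) (mul_comm 3 m)⟩
  have hc0 : c ≠ 0 := by rintro rfl; exact hs0 (by rw [← hc3]; ring)
  have hu3 (i : ℕ) : (c * ω ^ i) ^ 3 = s := by
    rw [mul_pow, ← pow_mul, mul_comm i, pow_mul, hω.pow_eq_one, one_pow, mul_one, hc3]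
  have huq (i : ℕ) : (c * ω ^ i) ^ (2 ^ n + 1) = 1 := by
    rw [hm, mul_pow, hc, one_mul, ← pow_mul, mul_comm i, pow_mul, pow_mul, hω.pow_eq_one,
      one_pow, one_pow]
  have hroot (i : ℕ) := hu3 i ▸ CharTwo.add_inv_pow_three_add_add_inv (c * ω ^ i)
  have hfrob (i : ℕ) := add_inv_pow_expChar_pow_of_pow_eq_one n (huq i)
  have hdist {i j : ℕ} (hi : i < 3) (hj : j < 3) (hij : i ≠ j) :
      c * ω ^ i + (c * ω ^ i)⁻¹ ≠ c * ω ^ j + (c * ω ^ j)⁻¹ := fun h =>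
    hij (hω.pow_inj hi hj (mul_left_cancel₀ hc0
      (CharTwo.eq_of_pow_three_eq_of_add_inv_eq hs0 hs1 (hu3 i) (hu3 j) h)).symm)
  have hsq : s ^ (2 ^ n + 1) = 1 := by rw [hm, pow_mul', hs, one_pow]
  refine ⟨add_inv_pow_expChar_pow_of_pow_eq_one n hsq,
    fun h => hs1 (CharTwo.eq_one_of_inv_eq hs0 (CharTwo.add_eq_zero.mp h).symm), _, _, _,
    ?_, ?_, ?_, hfrob 0, hfrob 1, hfrob 2, hroot 0, hroot 1, hroot 2⟩
  all_goals exact hdist (by norm_num) (by norm_num) (by norm_num)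
end

section
/- Let n be odd and ξ ∈ F_{2^n} nonzero. If x^3 + x + ξ has three distinct roots in F_{2^n}, then there exists s ∈ F_{2^{2n}} with s^{(2^n+1)/3} = 1, s ≠ 1, and ξ = s + s^{-1}. -/
theorem stmt_13 (n : ℕ) (hn : Odd n) (F : Type*) [Field F] [Fintype F]
    (hF : Fintype.card F = 2 ^ n) (E : Type*) [Field E] [Fintype E] [Algebra F E]
    (hE : Fintype.card E = 2 ^ (2 * n)) (ξ : F) (hξ : ξ ≠ 0)
    (hroots : ∃ x y z : F, x ≠ y ∧ x ≠ z ∧ y ≠ z ∧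
      x ^ 3 + x + ξ = 0 ∧ y ^ 3 + y + ξ = 0 ∧ z ^ 3 + z + ξ = 0) :
    ∃ s : E, s ^ ((2 ^ n + 1) / 3) = 1 ∧ s ≠ 1 ∧ algebraMap F E ξ = s + s⁻¹ := by
  obtain ⟨x, y, z, hxy, hxz, hyz, hx, hy, hz⟩ := hroots
  obtain ⟨k, hk⟩ := hn
  -- arithmetic facts
  obtain ⟨j, hj⟩ : (3:ℕ) ∣ 4 ^ k - 1 := by
    simpa using Nat.sub_dvd_pow_sub_pow 4 1 k
  have h4k1 : 1 ≤ (4:ℕ) ^ k := Nat.one_le_pow _ _ (by norm_num)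
  have h2n : (2:ℕ) ^ n = 6 * j + 2 := by
    have h1 : (2:ℕ) ^ n = 2 * 4 ^ k := by
      rw [hk, pow_succ, pow_mul]; norm_num; ring
    omega
  have hdvd3 : (3:ℕ) ∣ 2 ^ n + 1 := ⟨2 * j + 1, by omega⟩
  -- characteristic 2
  have h2E : (2 : E) = 0 := by
    have h := FiniteField.cast_card_eq_zero E
    rw [hE] at h
    push_cast at h
    exact pow_eq_zero_iff (by omega) |>.mp h
  have h2F : (2 : F) = 0 := by
    have h := FiniteField.cast_card_eq_zero F
    rw [hF] at h
    push_cast at h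
    exact pow_eq_zero_iff (by omega) |>.mp h
  haveI : Fact (Nat.Prime 2) := ⟨Nat.prime_two⟩
  haveI hcharE : CharP E 2 := by
    have hdvd : ringChar E ∣ 2 := ringChar.dvd (by exact_mod_cast h2E)
    rcases (Nat.dvd_prime Nat.prime_two).mp hdvd with h | h
    · exact absurd h CharP.ringChar_ne_one
    · exact h ▸ ringChar.charP E
  -- relations among the roots in F
  have key : ∀ a b : F, a ≠ b → a^3+a+ξ=0 → b^3+b+ξ=0 → a^2+a*b+b^2+1 = 0 := by
    intro a b hab ha hb
    have h : (a - b) * (a^2+a*b+b^2+1) = 0 := by linear_combination ha - hb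
    rcases mul_eq_zero.mp h with h | h
    · exact absurd (sub_eq_zero.mp h) hab
    · exact h
  have hB := key x y hxy hx hy
  have hBxz := key x z hxz hx hz
  have e1 : x + y + z = 0 := by
    have h : (y - z) * (x + y + z) = 0 := by linear_combination hB - hBxz
    rcases mul_eq_zero.mp h with h | h
    · exact absurd (sub_eq_zero.mp h) hyz
    · exact h
  have hZf : z = x + y := by linear_combination -e1 + z * h2F
  -- map into E
  have hf : Function.Injective (algebraMap F E) := (algebraMap F E).injective
  set X : E := algebraMap F E x with hXdef
  set Y : E := algebraMap F E y with hYdef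
  set Z : E := algebraMap F E z with hZdef
  set Ξ : E := algebraMap F E ξ with hΞdef
  have hZE : Z = X + Y := by
    rw [hZdef, hXdef, hYdef, hZf, map_add]
  have hBE : X^2 + X*Y + Y^2 + 1 = 0 := by
    have := congrArg (algebraMap F E) hB
    simp only [map_add, map_mul, map_pow, map_one, map_zero] at this
    exact this
  have hXE : X^3 + X + Ξ = 0 := by
    have := congrArg (algebraMap F E) hx
    simp only [map_add, map_pow, map_zero] at this
    exact this
  have hΞX : Ξ = X^3 + X := by linear_combination -hXE + Ξ * h2E
  have hXq : X ^ 2 ^ n = X := by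
    rw [hXdef, ← map_pow, ← hF, FiniteField.pow_card]
  have hYq : Y ^ 2 ^ n = Y := by
    rw [hYdef, ← map_pow, ← hF, FiniteField.pow_card]
  have hZq : Z ^ 2 ^ n = Z := by
    rw [hZdef, ← map_pow, ← hF, FiniteField.pow_card]
  -- a primitive cube root of unity in E
  haveI : Fact (Nat.Prime 3) := ⟨by norm_num⟩
  haveI := Classical.decEq E
  obtain ⟨g, hg⟩ := exists_prime_orderOf_dvd_card (G := Eˣ) 3 (by
    rw [Fintype.card_units, hE]
    have h1 : (3:ℕ) ∣ 4 ^ n - 1 := by simpa using Nat.sub_dvd_pow_sub_pow 4 1 n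
    have h2 : (2:ℕ) ^ (2*n) = 4 ^ n := by rw [pow_mul]; norm_num
    rw [h2]; exact h1)
  set ζ : E := (g : E) with hζdef
  have hg3 : g ^ 3 = 1 := by rw [← hg]; exact pow_orderOf_eq_one g
  have hζ3 : ζ ^ 3 = 1 := by
    rw [hζdef, ← Units.val_pow_eq_pow_val, hg3, Units.val_one]
  have hζ1 : ζ ≠ 1 := by
    intro h
    have hgg : g = 1 := Units.val_eq_one.mp h
    rw [hgg, orderOf_one] at hg
    norm_num at hg
  have hζ2 : ζ^2 = ζ + 1 := by
    have h : (ζ - 1) * (ζ^2 + ζ + 1) = 0 := by linear_combination hζ3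
    rcases mul_eq_zero.mp h with h | h
    · exact absurd (sub_eq_zero.mp h) hζ1
    · linear_combination h - ζ * h2E - h2E
  have hζq : ζ ^ 2 ^ n = ζ ^ 2 := by
    rw [h2n]
    have harith : 6 * j + 2 = 3 * (2 * j) + 2 := by ring
    rw [harith, pow_add, pow_mul, hζ3, one_pow, one_mul]
  have hζ2q : (ζ^2) ^ 2 ^ n = ζ := by
    rw [← pow_mul, mul_comm, pow_mul, hζq]
    have h4 : ((ζ^2:E))^2 = ζ^3 * ζ := by ring
    rw [h4, hζ3, one_mul]
  -- the Lagrange resolvents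
  have hmul : (X + ζ*Y + ζ^2*Z) * (X + ζ^2*Y + ζ*Z) = 1 := by
    linear_combination (X*ζ^3 + X*ζ^2 + X*ζ + Y*ζ^4 + Y*ζ^3 + Y*ζ^2 + Z*ζ^3) * hZE +
      (X^2*ζ + 2*X^2 + X*Y*ζ^2 + 3*X*Y*ζ + 7*X*Y + Y^2*ζ^2 + 3*Y^2*ζ + 5*Y^2) * hζ2 +
      (4*ζ + 3) * hBE +
      (4*X*Y*ζ + 2*X*Y + 2*Y^2*ζ + Y^2 + (-2:E)*ζ + (-2:E)) * h2E
  have hsum : (X + ζ*Y + ζ^2*Z)^3 + (X + ζ^2*Y + ζ*Z)^3 = X^3 + X := by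
    linear_combination (X^2*ζ^6 + 3*X^2*ζ^4 + X^2*ζ^3 + 6*X^2*ζ^2 + 3*X^2*ζ + 2*X*Y*ζ^6 +
      3*X*Y*ζ^5 + 6*X*Y*ζ^4 + 14*X*Y*ζ^3 + 3*X*Y*ζ^2 + X*Z*ζ^6 + 3*X*Z*ζ^4 + X*Z*ζ^3 +
      3*X*Z*ζ^2 + Y^2*ζ^6 + 6*Y^2*ζ^5 + 6*Y^2*ζ^4 + Y^2*ζ^3 + Y*Z*ζ^6 + 3*Y*Z*ζ^5 +
      3*Y*Z*ζ^4 + Y*Z*ζ^3 + Z^2*ζ^6 + Z^2*ζ^3) * hZE +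
      (X^3*ζ^4 + X^3*ζ^3 + 5*X^3*ζ^2 + 7*X^3*ζ + 18*X^3 + 3*X^2*Y*ζ^4 + 6*X^2*Y*ζ^3 +
      18*X^2*Y*ζ^2 + 39*X^2*Y*ζ + 69*X^2*Y + 3*X*Y^2*ζ^4 + 12*X*Y^2*ζ^3 + 30*X*Y^2*ζ^2 +
      57*X*Y^2*ζ + 93*X*Y^2 + 2*Y^3*ζ^4 + 8*Y^3*ζ^3 + 16*Y^3*ζ^2 + 26*Y^3*ζ + 42*Y^3) * hζ2 +
      (28*X*ζ + 19*X + 86*Y*ζ + 50*Y) * hBE +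
      (18*X*Y^2*ζ + 12*X*Y^2 + (-14:E)*X*ζ + (-10:E)*X + (-9:E)*Y^3*ζ + (-4:E)*Y^3 +
      (-43:E)*Y*ζ + (-25:E)*Y) * h2E
  -- Frobenius sends L1 to L2
  have hfrob : (X + ζ*Y + ζ^2*Z) ^ 2 ^ n = X + ζ^2*Y + ζ*Z := by
    rw [add_pow_char_pow, add_pow_char_pow, mul_pow, mul_pow, hXq, hYq, hZq, hζq, hζ2q]
  have hL1q : (X + ζ*Y + ζ^2*Z) ^ (2 ^ n + 1) = 1 := by
    rw [pow_succ, hfrob]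
    linear_combination hmul
  have hm3 : (X + ζ*Y + ζ^2*Z)^3 * (X + ζ^2*Y + ζ*Z)^3 = 1 := by
    rw [← mul_pow, hmul, one_pow]
  refine ⟨(X + ζ*Y + ζ^2*Z)^3, ?_, ?_, ?_⟩
  · rw [← pow_mul, Nat.mul_div_cancel' hdvd3]
    exact hL1q
  · intro h1
    have h2 : (X + ζ^2*Y + ζ*Z)^3 = 1 := by
      rw [h1, one_mul] at hm3; exact hm3
    have hΞ0 : Ξ = 0 := by
      rw [hΞX, ← hsum, h1, h2]
      linear_combination h2E
    exact hξ (hf (by rw [← hΞdef, hΞ0, map_zero]))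
  · rw [inv_eq_of_mul_eq_one_right hm3]
    exact hΞX.trans hsum.symm
end

section
/- Let n be even and ξ ∈ F_{2^n} with ξ = r^3 + r^{-3} for some nonzero r ∈ F_{2^n}, ξ ≠ 0. Then Tr(ξ^{-1}) = 0. -/
/-!
Put `t = r + r⁻¹`. In characteristic 2, `r ^ 3 + r⁻¹ ^ 3 = t * (t + 1) ^ 2`, and partial
fractions give `ξ⁻¹ = r / (r + 1) ^ 2 + t / (t + 1) ^ 2`. Each summand has the form
`s / (s + 1) ^ 2 = y ^ 2 + y` with `y = (s + 1)⁻¹`, and the trace of `y ^ 2 + y` vanishes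
because the trace is additive and Frobenius-invariant.
-/

open Finset

section ExpChar

variable {R : Type*} [CommRing R] (p : ℕ) [ExpChar R p]

theorem sum_range_pow_sub_self_pow_expChar_pow (n : ℕ) (x : R) :
    ∑ i ∈ range n, (x ^ p - x) ^ p ^ i = x ^ p ^ n - x := by
  have hstep : ∀ i ∈ range n, (x ^ p - x) ^ p ^ i = x ^ p ^ (i + 1) - x ^ p ^ i := fun i _ => by
    rw [sub_pow_expChar_pow, ← pow_mul, pow_succ']
  rw [sum_congr rfl hstep, sum_range_sub (fun i => x ^ p ^ i), pow_zero, pow_one]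

theorem sum_range_add_pow_expChar_pow (n : ℕ) (x y : R) :
    ∑ i ∈ range n, (x + y) ^ p ^ i =
      ∑ i ∈ range n, x ^ p ^ i + ∑ i ∈ range n, y ^ p ^ i := by
  simp only [add_pow_expChar_pow, sum_add_distrib]

end ExpChar

theorem FiniteField.sum_range_pow_sub_self_pow_eq_zero {F : Type*} [Field F] [Fintype F]
    {p n : ℕ} [ExpChar F p] (hF : Fintype.card F = p ^ n) (x : F) :
    ∑ i ∈ range n, (x ^ p - x) ^ p ^ i = 0 := by
  have := FiniteField.pow_card x
  rw [hF] at this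
  rw [sum_range_pow_sub_self_pow_expChar_pow, this, sub_self]

section CharTwo

variable {F : Type*} [Field F] [CharP F 2]

theorem div_add_one_sq_eq_sq_sub (s : F) : s / (s + 1) ^ 2 = (s + 1)⁻¹ ^ 2 - (s + 1)⁻¹ := by
  rcases eq_or_ne (s + 1) 0 with hs | hs
  · simp [hs]
  · field_simp
    linear_combination s * CharTwo.two_eq_zero (R := F)

theorem pow_three_add_inv_pow_three_eq (r : F) :
    r ^ 3 + r⁻¹ ^ 3 = (r + r⁻¹) * (r + r⁻¹ + 1) ^ 2 := by
  rcases eq_or_ne r 0 with hr | hr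
  · simp [hr]
  · field_simp
    linear_combination
      (-2 * r ^ 4 - 2 * r ^ 2 - r ^ 5 - 2 * r ^ 3 - r) * CharTwo.two_eq_zero (R := F)

theorem inv_mul_add_one_sq_s17 {t : F} (ht : t ≠ 0) (ht1 : t + 1 ≠ 0) :
    (t * (t + 1) ^ 2)⁻¹ = t⁻¹ + t / (t + 1) ^ 2 := by
  field_simp
  linear_combination (-t - t ^ 2) * CharTwo.two_eq_zero (R := F)

theorem inv_add_inv_self_eq_div {r : F} (hr : r ≠ 0) : (r + r⁻¹)⁻¹ = r / (r + 1) ^ 2 := by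
  have : (r + 1) ^ 2 = r * (r + r⁻¹) := by
    field_simp
    linear_combination r * CharTwo.two_eq_zero (R := F)
  rw [this]
  field_simp

theorem FiniteField.sum_range_div_add_one_sq_pow_eq_zero [Fintype F] {n : ℕ}
    (hF : Fintype.card F = 2 ^ n) (s : F) : ∑ i ∈ range n, (s / (s + 1) ^ 2) ^ 2 ^ i = 0 := by
  rw [div_add_one_sq_eq_sq_sub]
  exact FiniteField.sum_range_pow_sub_self_pow_eq_zero hF _

end CharTwo

theorem stmt_17_general (n : ℕ) (F : Type*) [Field F] [Fintype F]
    (hF : Fintype.card F = 2 ^ n) (r : F) (ξ : F)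
    (hξ : ξ = r ^ 3 + r⁻¹ ^ 3) (hξ0 : ξ ≠ 0) :
    ∑ i ∈ Finset.range n, ξ⁻¹ ^ 2 ^ i = 0 := by
  have : CharP F 2 := charP_of_card_eq_prime_pow hF
  rw [pow_three_add_inv_pow_three_eq] at hξ
  set t := r + r⁻¹ with ht_def
  obtain ⟨ht, ht1⟩ : t ≠ 0 ∧ t + 1 ≠ 0 := by simpa [hξ] using hξ0
  have hr : r ≠ 0 := by rintro rfl; simp [ht_def] at ht
  have key : ξ⁻¹ = r / (r + 1) ^ 2 + t / (t + 1) ^ 2 := by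
    rw [hξ, inv_mul_add_one_sq_s17 ht ht1, inv_add_inv_self_eq_div hr]
  rw [key, sum_range_add_pow_expChar_pow, FiniteField.sum_range_div_add_one_sq_pow_eq_zero hF,
    FiniteField.sum_range_div_add_one_sq_pow_eq_zero hF, add_zero]

theorem stmt_17 (n : ℕ) (hn : 0 < n) (hne : Even n) (F : Type*) [Field F] [Fintype F]
    (hF : Fintype.card F = 2 ^ n) (r : F) (hr : r ≠ 0) (ξ : F)
    (hξ : ξ = r ^ 3 + r⁻¹ ^ 3) (hξ0 : ξ ≠ 0) :
    ∑ i ∈ Finset.range n, ξ⁻¹ ^ 2 ^ i = 0 :=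
  stmt_17_general n F hF r ξ hξ hξ0
end
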